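/- Let a, b, c be positive integers and g = gcd(a+c, b+c). In the partizan subtraction game with S_L = {a, b} and S_R = {c}, if n mod g < c and n is sufficiently large, then Left moving second wins on a heap of size n (i.e., ¬RightFirstWins(n)). In particular, there exists n₀ such that this holds for all n ≥ n₀ with n mod g < c. -/

import Mathlib

mutual
def LeftFirstWins (SL SR : Finset ℕ) : ℕ → Prop
  | n => ∃ s ∈ SL, ∃ (_ : 0 < s) (_ : s ≤ n), ¬ RightFirstWins SL SR (n - s)
  termination_by n => n
  decreasing_by omega
def RightFirstWins (SL SR : Finset ℕ) : ℕ → Prop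
  | n => ∃ s ∈ SR, ∃ (_ : 0 < s) (_ : s ≤ n), ¬ LeftFirstWins SL SR (n - s)
  termination_by n => n
  decreasing_by omega
end

inductive Outcome | P | L | R | N
deriving DecidableEq

open Classical in
noncomputable def outcome (SL SR : Finset ℕ) (n : ℕ) : Outcome :=
  if LeftFirstWins SL SR n then
    if RightFirstWins SL SR n then .N else .L
  else
    if RightFirstWins SL SR n then .R else .P

/-- Every sufficiently large number is a nonnegative combination of two coprime positives. -/
lemma rep_lemma (A B : ℕ) (hA : 0 < A) (hB : 0 < B) (h : Nat.Coprime A B) :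
    ∀ q, A * B ≤ q → ∃ x y : ℕ, q = x * A + y * B := by
  intro q hq
  rcases eq_or_lt_of_le (show 1 ≤ A by omega) with hA1 | hA1
  · exact ⟨q, 0, by rw [← hA1]; omega⟩
  rcases eq_or_lt_of_le (show 1 ≤ B by omega) with hB1 | hB1
  · exact ⟨0, q, by rw [← hB1]; omega⟩
  have hf := frobeniusNumber_pair h hA1 hB1
  have hmem : q ∈ AddSubmonoid.closure ({A, B} : Set ℕ) := by
    by_contra hq'
    have := hf.2 hq'
    have : A + B ≤ A * B := Nat.add_le_mul hA1 hB1
    omega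
  rw [AddSubmonoid.mem_closure_pair] at hmem
  obtain ⟨x, y, hxy⟩ := hmem
  exact ⟨x, y, by simpa [smul_eq_mul, eq_comm] using hxy⟩

lemma key_lemma (a b c : ℕ) (ha : 0 < a) (hb : 0 < b) (hc : 0 < c) :
    ∀ s x y r, x + y = s → r < c →
      ¬ RightFirstWins {a, b} {c} (r + x * (a + c) + y * (b + c)) := by
  intro s
  induction s with
  | zero =>
    intro x y r hs hr
    have hx : x = 0 := by omega
    have hy : y = 0 := by omega
    subst hx; subst hy
    rw [RightFirstWins]
    rintro ⟨t, ht, h0, hle, -⟩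
    simp only [Finset.mem_singleton] at ht
    omega
  | succ s ih =>
    intro x y r hs hr
    rw [RightFirstWins]
    rintro ⟨t, ht, h0, hle, hL⟩
    simp only [Finset.mem_singleton] at ht
    rw [ht] at hle hL
    apply hL
    rw [LeftFirstWins]
    rcases Nat.eq_zero_or_pos x with hx | hx
    · -- y > 0, Left plays b
      subst hx
      obtain ⟨y', rfl⟩ : ∃ y', y = y' + 1 := ⟨y - 1, by omega⟩
      have hN : r + 0 * (a + c) + (y' + 1) * (b + c)
          = (r + 0 * (a + c) + y' * (b + c)) + c + b := by ring
      rw [hN]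
      refine ⟨b, by simp, hb, by omega, ?_⟩
      have h2 : (r + 0 * (a + c) + y' * (b + c)) + c + b - c - b
          = r + 0 * (a + c) + y' * (b + c) := by omega
      rw [h2]
      exact ih 0 y' r (by omega) hr
    · -- Left plays a
      obtain ⟨x', rfl⟩ : ∃ x', x = x' + 1 := ⟨x - 1, by omega⟩
      have hN : r + (x' + 1) * (a + c) + y * (b + c)
          = (r + x' * (a + c) + y * (b + c)) + c + a := by ring
      rw [hN]
      refine ⟨a, by simp, ha, by omega, ?_⟩
      have h2 : (r + x' * (a + c) + y * (b + c)) + c + a - c - a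
          = r + x' * (a + c) + y * (b + c) := by omega
      rw [h2]
      exact ih x' y r (by omega) hr

theorem stmt_3 (a b c : ℕ) (ha : 0 < a) (hb : 0 < b) (hc : 0 < c) :
    ∃ n₀ : ℕ, ∀ n ≥ n₀, n % Nat.gcd (a + c) (b + c) < c →
      ¬ RightFirstWins {a, b} {c} n := by
  set g := Nat.gcd (a + c) (b + c) with hg
  have hgpos : 0 < g := Nat.gcd_pos_of_pos_left _ (by omega)
  obtain ⟨A, hA⟩ : g ∣ a + c := Nat.gcd_dvd_left _ _
  obtain ⟨B, hB⟩ : g ∣ b + c := Nat.gcd_dvd_right _ _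
  have hApos : 0 < A := by nlinarith
  have hBpos : 0 < B := by nlinarith
  have hcop : Nat.Coprime A B := by
    have h1 : (a + c) / g = A := by rw [hA]; exact Nat.mul_div_cancel_left A hgpos
    have h2 : (b + c) / g = B := by rw [hB]; exact Nat.mul_div_cancel_left B hgpos
    have := Nat.coprime_div_gcd_div_gcd (m := a + c) (n := b + c) hgpos
    rwa [← hg, h1, h2] at this
  refine ⟨c + g * (A * B), fun n hn hr => ?_⟩
  set r := n % g with hrdef
  set q := n / g with hqdef
  have hn_eq : g * q + r = n := Nat.div_add_mod n g
  have hq : A * B ≤ q := by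
    have : g * (A * B) ≤ g * q := by omega
    exact Nat.le_of_mul_le_mul_left this hgpos
  obtain ⟨x, y, hxy⟩ := rep_lemma A B hApos hBpos hcop q hq
  have hneq : n = r + x * (a + c) + y * (b + c) := by
    rw [hA, hB]
    have : g * q = g * (x * A) + g * (y * B) := by rw [hxy]; ring
    nlinarith [this, hn_eq]
  rw [hneq]
  exact key_lemma a b c ha hb hc (x + y) x y r rfl hr
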